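/- arXiv:2406.10734 — 5 statements merged into one kernel-verified Lean document; each statement's English description precedes it below -/
import Mathlib

section
/- Let Z be a real-valued random variable with finite second moment, mean m = E[Z] and variance σ² = Var(Z), and let β ∈ (0,1). If √(1−β)·σ + √β·m ≤ 0, then P(Z ≤ 0) ≥ 1 − β. -/
/-!
Cantelli's one-sided Chebyshev inequality: Markov's inequality for `(Z - E[Z] + s)²` gives
`P(Z ≥ E[Z] + t) ≤ (Var Z + s²) / (t + s)²` for every `s ≥ 0`, and the choice `s = Var Z / t`
turns this into `Var Z / (Var Z + t²)`. If `E[Z] < 0`, take `t = -E[Z]`: the squared cone condition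
`(1 - β) Var Z ≤ β E[Z]²` says exactly that this bound is at most `β`. If `E[Z] ≥ 0`, both terms of
the cone condition vanish, so `Z = 0` almost surely.
-/

open MeasureTheory ProbabilityTheory

lemma one_sub_mul_le_mul_sq_of_sqrt_mul_add_sqrt_mul_nonpos {β v m : ℝ} (hβ : 0 ≤ β)
    (hv : 0 ≤ v) (h : √(1 - β) * √v + √β * m ≤ 0) : (1 - β) * v ≤ β * m ^ 2 := by
  have hsqrt : √((1 - β) * v) ≤ √(β * m ^ 2) := by
    rw [Real.sqrt_mul' _ hv, Real.sqrt_mul hβ, Real.sqrt_sq_eq_abs]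
    nlinarith [neg_le_abs m, Real.sqrt_nonneg β]
  exact (Real.sqrt_le_sqrt_iff (by positivity)).1 hsqrt

lemma one_sub_measureReal_compl_le {α : Type*} [MeasurableSpace α] (μ : Measure α)
    [IsProbabilityMeasure μ] (s : Set α) : 1 - μ.real sᶜ ≤ μ.real s := by
  have := measureReal_union_le (μ := μ) s sᶜ
  rw [Set.union_compl_self, probReal_univ] at this
  linarith

namespace ProbabilityTheory

variable {Ω : Type*} [MeasurableSpace Ω] {μ : Measure Ω} [IsProbabilityMeasure μ] {Z : Ω → ℝ}

lemma integral_sub_integral_add_const_sq (hZ : MemLp Z 2 μ) (s : ℝ) :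
    ∫ ω, (Z ω - μ[Z] + s) ^ 2 ∂μ = Var[Z; μ] + s ^ 2 := by
  have hZint := hZ.integrable one_le_two
  have hmean : ∫ ω, (Z ω - μ[Z] + s) ∂μ = s := by
    rw [integral_add (by fun_prop) (by fun_prop), integral_sub hZint (by fun_prop)]
    simp
  have hvar : Var[fun ω ↦ Z ω - μ[Z] + s; μ] = Var[Z; μ] := by
    rw [variance_add_const (X := fun ω ↦ Z ω - μ[Z]) (hZ.1.sub aestronglyMeasurable_const),
      variance_sub_const hZ.1]
  have hW : MemLp (fun ω ↦ Z ω - μ[Z] + s) 2 μ := (hZ.sub (memLp_const _)).add (memLp_const s)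
  have := variance_eq_sub hW
  simp only [Pi.pow_apply] at this
  rw [hvar, hmean] at this
  linarith

lemma measureReal_ge_add_le_variance_add_sq_div (hZ : MemLp Z 2 μ) {t s : ℝ} (ht : 0 < t)
    (hs : 0 ≤ s) :
    μ.real {ω | μ[Z] + t ≤ Z ω} ≤ (Var[Z; μ] + s ^ 2) / (t + s) ^ 2 := by
  have hts : 0 < (t + s) ^ 2 := by positivity
  have hsq_int : Integrable (fun ω ↦ (Z ω - μ[Z] + s) ^ 2) μ :=
    ((hZ.sub (memLp_const _)).add (memLp_const _)).integrable_sq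
  have markov := mul_meas_ge_le_integral_of_nonneg
    (ae_of_all μ fun ω ↦ sq_nonneg (Z ω - μ[Z] + s) : 0 ≤ᵐ[μ] fun ω ↦ (Z ω - μ[Z] + s) ^ 2)
    hsq_int ((t + s) ^ 2)
  rw [integral_sub_integral_add_const_sq hZ s] at markov
  have hsub : {ω | μ[Z] + t ≤ Z ω} ⊆ {ω | (t + s) ^ 2 ≤ (Z ω - μ[Z] + s) ^ 2} := by
    intro ω (hω : μ[Z] + t ≤ Z ω)
    exact pow_le_pow_left₀ (by positivity) (show t + s ≤ Z ω - μ[Z] + s by linarith) 2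
  rw [le_div_iff₀ hts, mul_comm]
  exact (mul_le_mul_of_nonneg_left (measureReal_mono hsub) hts.le).trans markov

/-- **Cantelli's inequality**. -/
lemma measureReal_ge_add_le_variance_div (hZ : MemLp Z 2 μ) {t : ℝ} (ht : 0 < t) :
    μ.real {ω | μ[Z] + t ≤ Z ω} ≤ Var[Z; μ] / (Var[Z; μ] + t ^ 2) := by
  convert measureReal_ge_add_le_variance_add_sq_div hZ ht
    (div_nonneg (variance_nonneg Z μ) ht.le) using 1
  field_simp
  ring

end ProbabilityTheory

/-- Theorem (Chebyshev–Cantelli sufficiency for chance constraints): if a real random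
variable `Z` with finite second moment, mean `m` and standard deviation `σ = √Var(Z)`
satisfies `√(1-β)·σ + √β·m ≤ 0` for `β ∈ (0,1)`, then `P(Z ≤ 0) ≥ 1 - β`. -/
theorem chance_constraint_of_mean_variance
    {Ω : Type*} [MeasurableSpace Ω] (μ : Measure Ω) [IsProbabilityMeasure μ]
    (Z : Ω → ℝ) (hZ : MemLp Z 2 μ) (β : ℝ) (hβ : β ∈ Set.Ioo (0 : ℝ) 1)
    (h : Real.sqrt (1 - β) * Real.sqrt (variance Z μ)
        + Real.sqrt β * (∫ ω, Z ω ∂μ) ≤ 0) :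
    1 - β ≤ (μ {ω | Z ω ≤ 0}).toReal := by
  obtain ⟨hβ0, hβ1⟩ := hβ
  have hV := variance_nonneg Z μ
  rw [← measureReal_def]
  suffices hviolation : μ.real {ω | Z ω ≤ 0}ᶜ ≤ β by
    linarith [one_sub_measureReal_compl_le μ {ω | Z ω ≤ 0}]
  rcases lt_or_ge μ[Z] 0 with hneg | hnonneg
  · calc μ.real {ω | Z ω ≤ 0}ᶜ ≤ μ.real {ω | μ[Z] + -μ[Z] ≤ Z ω} :=
          measureReal_mono fun ω (hω : ¬Z ω ≤ 0) ↦
            show μ[Z] + -μ[Z] ≤ Z ω by linarith [not_le.1 hω]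
      _ ≤ Var[Z; μ] / (Var[Z; μ] + (-μ[Z]) ^ 2) :=
          measureReal_ge_add_le_variance_div hZ (neg_pos.2 hneg)
      _ ≤ β := by
          rw [div_le_iff₀ (add_pos_of_nonneg_of_pos hV (pow_pos (neg_pos.2 hneg) 2))]
          linarith [one_sub_mul_le_mul_sq_of_sqrt_mul_add_sqrt_mul_nonpos hβ0.le hV h]
  · obtain ⟨hvar, hmean⟩ : √(1 - β) * √Var[Z; μ] = 0 ∧ √β * μ[Z] = 0 :=
      (add_eq_zero_iff_of_nonneg (by positivity) (by positivity)).1 (h.antisymm (by positivity))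
    rw [mul_eq_zero, Real.sqrt_eq_zero', Real.sqrt_eq_zero', or_iff_right (by linarith),
      hV.ge_iff_eq'] at hvar
    rw [mul_eq_zero, or_iff_right (Real.sqrt_pos.2 hβ0).ne'] at hmean
    have hZ_nonpos : ∀ᵐ ω ∂μ, Z ω ≤ 0 := (ae_eq_integral_of_variance_eq_zero hZ hvar).mono
      fun ω hω ↦ (hω.trans hmean).le
    rw [measureReal_def, Set.compl_ofPred, ae_iff.1 hZ_nonpos]
    exact hβ0.le
end

section
/- Let m < 0, σ > 0 and β ∈ (0,1) satisfy √(1−β)·σ + √β·m > 0. Then there exists a probability measure μ on ℝ (which may be taken to be supported on two points) with mean ∫ x dμ(x) = m and variance ∫ (x − m)² dμ(x) = σ² such that μ((−∞, 0]) < 1 − β. -/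
open MeasureTheory

lemma my_integrable_dirac {f : ℝ → ℝ} (hf : Measurable f) (a : ℝ) :
    Integrable f (Measure.dirac a) := by
  refine ⟨hf.aestronglyMeasurable, ?_⟩
  rw [HasFiniteIntegral, lintegral_dirac]
  exact ENNReal.coe_lt_top

/-- Theorem (sharpness of the Chebyshev–Cantelli chance-constraint reformulation):
if `m < 0`, `σ > 0`, `β ∈ (0,1)` and `√(1-β)·σ + √β·m > 0`, then some probability
measure on `ℝ` with mean `m` and variance `σ²` violates the chance constraint
`μ((-∞, 0]) ≥ 1 - β`. -/
theorem chance_constraint_sharpness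
    (m σ β : ℝ) (hm : m < 0) (hσ : 0 < σ) (hβ : β ∈ Set.Ioo (0 : ℝ) 1)
    (h : Real.sqrt (1 - β) * σ + Real.sqrt β * m > 0) :
    ∃ μ : Measure ℝ, IsProbabilityMeasure μ ∧
      (∫ x, x ∂μ) = m ∧ (∫ x, (x - m) ^ 2 ∂μ) = σ ^ 2 ∧
      μ (Set.Iic 0) < ENNReal.ofReal (1 - β) := by
  obtain ⟨hβ0, hβ1⟩ := hβ
  -- key inequality: β m² < (1-β) σ²
  have hkey : β * m ^ 2 < (1 - β) * σ ^ 2 := by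
    have h1 : Real.sqrt β * (-m) < Real.sqrt (1 - β) * σ := by linarith
    have h2 := mul_self_lt_mul_self (mul_nonneg (Real.sqrt_nonneg _) (by linarith)) h1
    have e1 : Real.sqrt β * Real.sqrt β = β := Real.mul_self_sqrt hβ0.le
    have e2 : Real.sqrt (1 - β) * Real.sqrt (1 - β) = 1 - β :=
      Real.mul_self_sqrt (by linarith)
    nlinarith
  have hm2 : 0 < m ^ 2 := by nlinarith
  have hden : 0 < σ ^ 2 + m ^ 2 := by positivity
  have hK : m ^ 2 / (σ ^ 2 + m ^ 2) < 1 - β := by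
    rw [div_lt_iff₀ hden]; nlinarith
  set p : ℝ := (m ^ 2 / (σ ^ 2 + m ^ 2) + (1 - β)) / 2 with hp_def
  have hKp : m ^ 2 / (σ ^ 2 + m ^ 2) < p := by rw [hp_def]; linarith
  have hp1β : p < 1 - β := by rw [hp_def]; linarith
  have hp0 : 0 < p := lt_trans (by positivity) hKp
  have hKp' : m ^ 2 < p * (σ ^ 2 + m ^ 2) := (div_lt_iff₀ hden).mp hKp
  have hp1 : p < 1 := by linarith
  have h1p : 0 < 1 - p := by linarith
  set a : ℝ := m - σ * Real.sqrt ((1 - p) / p) with ha_def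
  set b : ℝ := m + σ * Real.sqrt (p / (1 - p)) with hb_def
  have hsq1 : Real.sqrt ((1 - p) / p) ^ 2 = (1 - p) / p :=
    Real.sq_sqrt (by positivity)
  have hsq2 : Real.sqrt (p / (1 - p)) ^ 2 = p / (1 - p) :=
    Real.sq_sqrt (by positivity)
  -- b > 0
  have hb_pos : 0 < b := by
    have hlt : -m < σ * Real.sqrt (p / (1 - p)) := by
      have h1 : (-m) ^ 2 < (σ * Real.sqrt (p / (1 - p))) ^ 2 := by
        rw [mul_pow, hsq2, show σ ^ 2 * (p / (1 - p)) = σ ^ 2 * p / (1 - p) by ring,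
          lt_div_iff₀ h1p]
        nlinarith [hKp']
      nlinarith [Real.sqrt_nonneg (p / (1 - p)),
        mul_nonneg hσ.le (Real.sqrt_nonneg (p / (1 - p)))]
    simp only [hb_def]; linarith
  have ha_le : a ≤ 0 := by
    have : 0 ≤ σ * Real.sqrt ((1 - p) / p) := by positivity
    simp only [ha_def]; linarith
  -- the cancellation identity
  have hcancel : p * Real.sqrt ((1 - p) / p) = (1 - p) * Real.sqrt (p / (1 - p)) := by
    have e1 : p * Real.sqrt ((1 - p) / p) = Real.sqrt (p * (1 - p)) := by
      rw [show p * Real.sqrt ((1 - p) / p) = Real.sqrt (p ^ 2) * Real.sqrt ((1 - p) / p) by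
        rw [Real.sqrt_sq hp0.le]]
      rw [← Real.sqrt_mul (by positivity)]
      congr 1; field_simp
    have e2 : (1 - p) * Real.sqrt (p / (1 - p)) = Real.sqrt (p * (1 - p)) := by
      rw [show (1 - p) * Real.sqrt (p / (1 - p)) = Real.sqrt ((1 - p) ^ 2) * Real.sqrt (p / (1 - p)) by
        rw [Real.sqrt_sq h1p.le]]
      rw [← Real.sqrt_mul (by positivity)]
      congr 1; field_simp
    rw [e1, e2]
  refine ⟨ENNReal.ofReal p • Measure.dirac a + ENNReal.ofReal (1 - p) • Measure.dirac b,
    ?_, ?_, ?_, ?_⟩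
  · constructor
    simp [Measure.add_apply, Measure.smul_apply, Measure.dirac_apply,
      ← ENNReal.ofReal_add hp0.le h1p.le]
  · have hi1 : Integrable (fun x : ℝ => x) (Measure.dirac a) :=
      my_integrable_dirac measurable_id a
    have hi2 : Integrable (fun x : ℝ => x) (Measure.dirac b) :=
      my_integrable_dirac measurable_id b
    rw [integral_add_measure (hi1.smul_measure ENNReal.ofReal_ne_top)
      (hi2.smul_measure ENNReal.ofReal_ne_top),
      integral_smul_measure, integral_smul_measure,
      integral_dirac, integral_dirac,
      ENNReal.toReal_ofReal hp0.le, ENNReal.toReal_ofReal h1p.le]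
    simp only [smul_eq_mul, ha_def, hb_def]
    linear_combination (-σ) * hcancel
  · have hi1 : Integrable (fun x : ℝ => (x - m) ^ 2) (Measure.dirac a) :=
      my_integrable_dirac (by fun_prop) a
    have hi2 : Integrable (fun x : ℝ => (x - m) ^ 2) (Measure.dirac b) :=
      my_integrable_dirac (by fun_prop) b
    rw [integral_add_measure (hi1.smul_measure ENNReal.ofReal_ne_top)
      (hi2.smul_measure ENNReal.ofReal_ne_top),
      integral_smul_measure, integral_smul_measure,
      integral_dirac, integral_dirac,
      ENNReal.toReal_ofReal hp0.le, ENNReal.toReal_ofReal h1p.le]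
    simp only [smul_eq_mul, ha_def, hb_def]
    have e1 : (m - σ * Real.sqrt ((1 - p) / p) - m) ^ 2 = σ ^ 2 * ((1 - p) / p) := by
      rw [show m - σ * Real.sqrt ((1 - p) / p) - m = -(σ * Real.sqrt ((1 - p) / p)) by ring,
        neg_pow, mul_pow, hsq1]; ring
    have e2 : (m + σ * Real.sqrt (p / (1 - p)) - m) ^ 2 = σ ^ 2 * (p / (1 - p)) := by
      rw [show m + σ * Real.sqrt (p / (1 - p)) - m = σ * Real.sqrt (p / (1 - p)) by ring,
        mul_pow, hsq2]
    rw [e1, e2]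
    field_simp
    ring
  · have hma : Measure.dirac a (Set.Iic (0:ℝ)) = 1 := by
      rw [Measure.dirac_apply_of_mem (by simpa using ha_le)]
    have hmb : Measure.dirac b (Set.Iic (0:ℝ)) = 0 := by
      rw [Measure.dirac_apply' _ measurableSet_Iic]
      simp [Set.indicator, not_le.mpr hb_pos]
    simp only [Measure.add_apply, Measure.smul_apply, hma, hmb, smul_eq_mul,
      mul_one, mul_zero, add_zero]
    exact (ENNReal.ofReal_lt_ofReal_iff (by linarith)).mpr hp1β
end

section
/- Let β ∈ (0,1), m ∈ ℝ and σ ≥ 0. Then the following are equivalent: (i) every probability measure μ on ℝ with finite second moment, mean ∫ x dμ(x) = m and variance ∫ (x − m)² dμ(x) = σ² satisfies μ((−∞, 0]) ≥ 1 − β; (ii) √(1−β)·σ + √β·m ≤ 0. -/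
/-!
Sufficiency is Cantelli's one-sided inequality `P(X ≥ E X + t) ≤ σ² / (σ² + t²)`, which follows
from Markov's inequality for `(X - E X + σ² / t)²`; at `t = -m` the bound is at most `β` exactly
when `(1 - β) σ² ≤ β m²`, a squared form of the second-order cone condition. When `m = 0` the
condition forces `σ = 0`, so `X = 0` almost surely.

Necessity: Cantelli's bound is attained by the two-point law with mass `σ² / (s² + σ²)` at `m + s`
and the rest at `m - σ² / s`. If the condition fails and `σ > 0`, some `s > max (-m) 0` makes that
mass exceed `β` while `m + s > 0`; if `σ = 0` the law is the Dirac mass at `m > 0`.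
-/

open MeasureTheory ProbabilityTheory

theorem sq_div_sq_add_sq_mem_Icc (σ s : ℝ) : σ ^ 2 / (s ^ 2 + σ ^ 2) ∈ Set.Icc 0 1 :=
  ⟨by positivity, div_le_one_of_le₀ (le_add_of_nonneg_left (sq_nonneg s)) (by positivity)⟩

namespace MeasureTheory.Measure

variable {α : Type*} [MeasurableSpace α] [MeasurableSingletonClass α]

noncomputable def twoPoint (p : ℝ) (a b : α) : Measure α :=
  ENNReal.ofReal (1 - p) • dirac a + ENNReal.ofReal p • dirac b

variable {p : ℝ} {a b : α}

theorem twoPoint_apply (s : Set α) :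
    twoPoint p a b s =
      ENNReal.ofReal (1 - p) * s.indicator 1 a + ENNReal.ofReal p * s.indicator 1 b := by
  simp [twoPoint, dirac_apply]

theorem twoPoint_apply_le {s : Set α} (hb : b ∉ s) :
    twoPoint p a b s ≤ ENNReal.ofReal (1 - p) := by
  rw [twoPoint_apply, Set.indicator_of_notMem hb, mul_zero, add_zero]
  exact mul_le_of_le_one_right' (Set.indicator_apply_le' (fun _ => le_rfl) fun _ => zero_le_one)

theorem isProbabilityMeasure_twoPoint (hp0 : 0 ≤ p) (hp1 : p ≤ 1) :
    IsProbabilityMeasure (twoPoint p a b) := by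
  constructor
  rw [twoPoint_apply, Set.indicator_of_mem (Set.mem_univ a), Set.indicator_of_mem (Set.mem_univ b),
    Pi.one_apply, Pi.one_apply, mul_one, mul_one, ← ENNReal.ofReal_add (sub_nonneg.2 hp1) hp0,
    sub_add_cancel, ENNReal.ofReal_one]

theorem integrable_twoPoint {E : Type*} [NormedAddCommGroup E] (f : α → E) :
    Integrable f (twoPoint p a b) :=
  ((integrable_dirac enorm_lt_top).smul_measure ENNReal.ofReal_ne_top).add_measure
    ((integrable_dirac enorm_lt_top).smul_measure ENNReal.ofReal_ne_top)

theorem integral_twoPoint (hp0 : 0 ≤ p) (hp1 : p ≤ 1) (f : α → ℝ) :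
    ∫ x, f x ∂twoPoint p a b = (1 - p) * f a + p * f b := by
  rw [twoPoint, integral_add_measure
      ((integrable_dirac enorm_lt_top).smul_measure ENNReal.ofReal_ne_top)
      ((integrable_dirac enorm_lt_top).smul_measure ENNReal.ofReal_ne_top),
    integral_smul_measure, integral_smul_measure, integral_dirac, integral_dirac,
    ENNReal.toReal_ofReal (sub_nonneg.2 hp1), ENNReal.toReal_ofReal hp0, smul_eq_mul, smul_eq_mul]

end MeasureTheory.Measure

namespace ProbabilityTheory

open Measure

/-- The equality case of Cantelli's inequality at deviation `s`. -/
noncomputable def cantelliTwoPoint (m σ s : ℝ) : Measure ℝ :=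
  twoPoint (σ ^ 2 / (s ^ 2 + σ ^ 2)) (m - σ ^ 2 / s) (m + s)

section cantelliTwoPoint

variable (m σ s : ℝ)

instance : IsProbabilityMeasure (cantelliTwoPoint m σ s) :=
  isProbabilityMeasure_twoPoint (sq_div_sq_add_sq_mem_Icc σ s).1 (sq_div_sq_add_sq_mem_Icc σ s).2

theorem memLp_id_cantelliTwoPoint : MemLp id 2 (cantelliTwoPoint m σ s) :=
  (memLp_two_iff_integrable_sq aestronglyMeasurable_id).2 (integrable_twoPoint _)

variable {s}

theorem integral_id_cantelliTwoPoint (hs : s ≠ 0) : ∫ x, x ∂cantelliTwoPoint m σ s = m := by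
  rw [cantelliTwoPoint, integral_twoPoint (sq_div_sq_add_sq_mem_Icc σ s).1
    (sq_div_sq_add_sq_mem_Icc σ s).2]
  have : s ^ 2 + σ ^ 2 ≠ 0 := by positivity
  field_simp
  ring

theorem integral_sub_sq_cantelliTwoPoint (hs : s ≠ 0) :
    ∫ x, (x - m) ^ 2 ∂cantelliTwoPoint m σ s = σ ^ 2 := by
  rw [cantelliTwoPoint, integral_twoPoint (sq_div_sq_add_sq_mem_Icc σ s).1
    (sq_div_sq_add_sq_mem_Icc σ s).2]
  have : s ^ 2 + σ ^ 2 ≠ 0 := by positivity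
  field_simp
  ring

end cantelliTwoPoint

variable {Ω : Type*} [MeasurableSpace Ω] {μ : Measure Ω} [IsProbabilityMeasure μ] {X : Ω → ℝ}

theorem integral_add_const_sq (hX : MemLp X 2 μ) (c : ℝ) :
    ∫ ω, (X ω + c) ^ 2 ∂μ = Var[X; μ] + (μ[X] + c) ^ 2 := by
  have hXc : MemLp (fun ω => X ω + c) 2 μ := hX.add (memLp_const c)
  have hmean : μ[fun ω => X ω + c] = μ[X] + c := by
    rw [integral_add (hX.integrable one_le_two) (integrable_const c), integral_const, probReal_univ,
      one_smul]
  rw [← variance_add_const hX.aestronglyMeasurable c, variance_eq_sub hXc, hmean]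
  simp

/-- **Cantelli's inequality**, the one-sided Chebyshev inequality. -/
theorem measure_ge_le_variance_div_variance_add_sq (hX : MemLp X 2 μ) {t : ℝ} (ht : 0 < t) :
    μ {ω | μ[X] + t ≤ X ω} ≤ ENNReal.ofReal (Var[X; μ] / (Var[X; μ] + t ^ 2)) := by
  set v := Var[X; μ]
  have hv : 0 ≤ v := variance_nonneg X μ
  -- Markov's inequality for `(X - μ[X] + u)²`, with the shift `u = v / t` optimal.
  set u := v / t
  have hu : 0 ≤ u := by positivity
  have hsub : {ω | μ[X] + t ≤ X ω} ⊆ {ω | (t + u) ^ 2 ≤ (X ω - μ[X] + u) ^ 2} := fun ω hω => by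
    simp only [Set.mem_ofPred_eq] at hω ⊢
    exact pow_le_pow_left₀ (by positivity) (by linarith) 2
  have hY : MemLp (fun ω => X ω - μ[X] + u) 2 μ := (hX.sub (memLp_const μ[X])).add (memLp_const u)
  have hmarkov := mul_meas_ge_le_integral_of_nonneg (ae_of_all μ fun ω => sq_nonneg _)
    hY.integrable_sq ((t + u) ^ 2)
  have hsecond : ∫ ω, (X ω - μ[X] + u) ^ 2 ∂μ = v + u ^ 2 := by
    have hshift (ω : Ω) : X ω - μ[X] + u = X ω + (u - μ[X]) := by ring
    simp_rw [hshift, integral_add_const_sq hX]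
    ring
  rw [hsecond] at hmarkov
  rw [← ofReal_measureReal]
  refine ENNReal.ofReal_le_ofReal ((measureReal_mono hsub).trans ?_)
  calc _ ≤ (v + u ^ 2) / (t + u) ^ 2 := (le_div_iff₀' (by positivity)).2 hmarkov
    _ = v / (v + t ^ 2) := by
      have hut : u * t = v := div_mul_cancel₀ v ht.ne'
      field_simp
      linear_combination (u * t - v) * hut

theorem ofReal_one_sub_le_measure_nonpos {β : ℝ} (hβ0 : 0 < β) (hβ1 : β < 1) (hX : MemLp X 2 μ)
    (h : √(1 - β) * √Var[X; μ] + √β * μ[X] ≤ 0) :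
    ENNReal.ofReal (1 - β) ≤ μ {ω | X ω ≤ 0} := by
  set v := Var[X; μ]
  have hsq : (1 - β) * v ≤ β * μ[X] ^ 2 := by
    have hle : √(1 - β) * √v ≤ -(√β * μ[X]) := by linarith
    have hsq' := pow_le_pow_left₀ (by positivity) hle 2
    rwa [mul_pow, neg_sq, mul_pow, Real.sq_sqrt (by linarith), Real.sq_sqrt (variance_nonneg X μ),
      Real.sq_sqrt hβ0.le] at hsq'
  have hmean : μ[X] ≤ 0 :=
    nonpos_of_mul_nonpos_right
      (by linarith [mul_nonneg (Real.sqrt_nonneg (1 - β)) (Real.sqrt_nonneg v)])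
      (Real.sqrt_pos.2 hβ0)
  have hpos : μ {ω | 0 < X ω} ≤ ENNReal.ofReal β := by
    rcases hmean.lt_or_eq with hmean | hmean
    · calc μ {ω | 0 < X ω} ≤ μ {ω | μ[X] + -μ[X] ≤ X ω} :=
            measure_mono fun ω hω => by simpa using le_of_lt hω
        _ ≤ ENNReal.ofReal (v / (v + (-μ[X]) ^ 2)) :=
            measure_ge_le_variance_div_variance_add_sq hX (neg_pos.2 hmean)
        _ ≤ ENNReal.ofReal β := by
            refine ENNReal.ofReal_le_ofReal (div_le_of_le_mul₀ ?_ hβ0.le ?_)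
            · exact add_nonneg (variance_nonneg X μ) (sq_nonneg _)
            · linarith
    · have hv : v = 0 := by
        rw [hmean] at hsq
        nlinarith [variance_nonneg X μ]
      have hnull : μ {ω | 0 < X ω} = 0 := by
        refine measure_mono_null ?_ (ae_iff.1 (ae_eq_integral_of_variance_eq_zero hX hv))
        intro ω (hω : 0 < X ω) (heq : X ω = μ[X])
        linarith
      simp [hnull]
  calc ENNReal.ofReal (1 - β) = 1 - ENNReal.ofReal β := by
        rw [ENNReal.ofReal_sub _ hβ0.le, ENNReal.ofReal_one]
    _ ≤ 1 - μ {ω | 0 < X ω} := tsub_le_tsub_left hpos 1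
    _ ≤ μ {ω | X ω ≤ 0} := by
        rw [tsub_le_iff_right, ← measure_univ (μ := μ)]
        exact (measure_mono fun ω _ => le_or_gt (X ω) 0).trans (measure_union_le _ _)

theorem exists_cantelliTwoPoint_Iic_zero_lt {β m σ : ℝ} (hβ0 : 0 < β) (hβ1 : β < 1) (hσ : 0 ≤ σ)
    (h : 0 < √(1 - β) * σ + √β * m) :
    ∃ s ≠ 0, cantelliTwoPoint m σ s (Set.Iic 0) < ENNReal.ofReal (1 - β) := by
  have hsqrtβ : 0 < √β := Real.sqrt_pos.2 hβ0
  rcases hσ.eq_or_lt with rfl | hσ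
  · have hm : 0 < m := pos_of_mul_pos_right (by simpa using h) hsqrtβ.le
    refine ⟨1, one_ne_zero, ?_⟩
    simp [cantelliTwoPoint, twoPoint_apply, hm.not_ge, hβ1, (hm.trans (lt_add_one m)).not_ge]
  · have hupper : max (-m) 0 < √(1 - β) * σ / √β := by
      refine max_lt ((lt_div_iff₀ hsqrtβ).2 (by linarith)) ?_
      have : 0 < √(1 - β) := Real.sqrt_pos.2 (by linarith)
      positivity
    obtain ⟨s, hs_lo, hs_hi⟩ := exists_between hupper
    have hs : 0 < s := (le_max_right _ _).trans_lt hs_lo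
    have hb : m + s ∉ Set.Iic 0 := by
      simp only [Set.mem_Iic, not_le]
      linarith [le_max_left (-m) 0]
    have hp : β < σ ^ 2 / (s ^ 2 + σ ^ 2) := by
      have hlt := pow_lt_pow_left₀ ((lt_div_iff₀ hsqrtβ).1 hs_hi) (by positivity) two_ne_zero
      rw [mul_pow, mul_pow, Real.sq_sqrt hβ0.le, Real.sq_sqrt (by linarith)] at hlt
      rw [lt_div_iff₀ (by positivity)]
      linarith
    exact ⟨s, hs.ne', (twoPoint_apply_le hb).trans_lt
      ((ENNReal.ofReal_lt_ofReal_iff (by linarith)).2 (by linarith))⟩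

end ProbabilityTheory

/-- Theorem (distributionally robust chance constraint, Calafiore–El Ghaoui):
for `β ∈ (0,1)`, `m ∈ ℝ` and `σ ≥ 0`, every probability measure on `ℝ` with finite
second moment, mean `m` and variance `σ²` satisfies `μ((-∞,0]) ≥ 1 - β` if and only
if `√(1-β)·σ + √β·m ≤ 0`. -/
theorem distributionally_robust_chance_constraint_iff
    (β m σ : ℝ) (hβ : β ∈ Set.Ioo (0 : ℝ) 1) (hσ : 0 ≤ σ) :
    (∀ μ : Measure ℝ, IsProbabilityMeasure μ → MemLp id 2 μ →
      (∫ x, x ∂μ) = m → (∫ x, (x - m) ^ 2 ∂μ) = σ ^ 2 →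
      ENNReal.ofReal (1 - β) ≤ μ (Set.Iic 0)) ↔
    Real.sqrt (1 - β) * σ + Real.sqrt β * m ≤ 0 := by
  obtain ⟨hβ0, hβ1⟩ := hβ
  constructor
  · intro H
    by_contra! hpos
    obtain ⟨s, hs, hlt⟩ := exists_cantelliTwoPoint_Iic_zero_lt hβ0 hβ1 hσ hpos
    exact (H _ inferInstance (memLp_id_cantelliTwoPoint m σ s)
      (integral_id_cantelliTwoPoint m σ hs) (integral_sub_sq_cantelliTwoPoint m σ hs)).not_gt hlt
  · intro h μ _ hX hmean hvar
    have hσ_eq : √Var[id; μ] = σ := by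
      rw [variance_eq_integral aemeasurable_id]
      simpa [hmean, hvar] using Real.sqrt_sq hσ
    have hconstraint : √(1 - β) * √Var[id; μ] + √β * μ[id] ≤ 0 := by
      rwa [hσ_eq, show μ[id] = m from hmean]
    exact ofReal_one_sub_le_measure_nonpos hβ0 hβ1 hX hconstraint
end

section
/- Let X be a real-valued random variable with finite second moment, let a, b ∈ ℝ, and let β ∈ (0,1). If √((1−β)·a²·Var(X)) + √β·(a·E[X] + b) ≤ 0, then P(a·X + b ≤ 0) ≥ 1 − β. -/
/-!
Write `Y = aX + b`. The hypothesis says exactly that `E[Y] ≤ 0` and `(1 - β) Var Y ≤ β E[Y]²`.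
If `E[Y] < 0`, Cantelli's inequality `P(Y ≥ E[Y] + t) ≤ Var Y / (Var Y + t²)` with `t = -E[Y]`
bounds `P(Y > 0)` by `β`; if `E[Y] = 0`, then `Var Y = 0`, so `Y = 0` almost surely.
-/

open MeasureTheory ProbabilityTheory

lemma Real.nonpos_and_le_mul_sq_of_sqrt_add_sqrt_mul_nonpos {x β m : ℝ} (hβ : 0 < β)
    (h : √x + √β * m ≤ 0) : m ≤ 0 ∧ x ≤ β * m ^ 2 := by
  obtain ⟨hm, hx⟩ := Real.sqrt_le_iff.1 (show √x ≤ -(√β * m) by linarith)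
  refine ⟨nonpos_of_mul_nonpos_right (by linarith) (Real.sqrt_pos.2 hβ), ?_⟩
  rwa [neg_sq, mul_pow, Real.sq_sqrt hβ.le] at hx

namespace ProbabilityTheory

variable {Ω : Type*} [MeasurableSpace Ω] {μ : Measure Ω} [IsProbabilityMeasure μ] {Y : Ω → ℝ}

lemma integral_sq_sub_integral_add (hY : MemLp Y 2 μ) (u : ℝ) :
    ∫ ω, (Y ω - μ[Y] + u) ^ 2 ∂μ = Var[Y; μ] + u ^ 2 := by
  have hmean : μ[fun ω ↦ Y ω - μ[Y] + u] = u := by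
    change ∫ ω, (Y ω - μ[Y] + u) ∂μ = u
    rw [integral_add (f := fun ω ↦ Y ω - μ[Y])
      ((hY.integrable one_le_two).sub (integrable_const _)) (integrable_const u),
      integral_sub (hY.integrable one_le_two) (integrable_const _)]
    simp
  have hvar : Var[fun ω ↦ Y ω - μ[Y] + u; μ] = Var[Y; μ] := by
    rw [variance_add_const (X := fun ω ↦ Y ω - μ[Y])
      (hY.sub (memLp_const _)).aestronglyMeasurable,
      variance_sub_const hY.aestronglyMeasurable]
  have hZ : MemLp (fun ω ↦ Y ω - μ[Y] + u) 2 μ := (hY.sub (memLp_const _)).add (memLp_const u)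
  have := variance_eq_sub hZ
  rw [hmean, hvar] at this
  simp only [Pi.pow_apply] at this
  linarith

/-- **Cantelli's inequality**. -/
theorem measureReal_integral_add_le_le_variance_div (hY : MemLp Y 2 μ) {t : ℝ} (ht : 0 < t) :
    μ.real {ω | μ[Y] + t ≤ Y ω} ≤ Var[Y; μ] / (Var[Y; μ] + t ^ 2) := by
  set v := Var[Y; μ]
  have hv : 0 ≤ v := variance_nonneg Y μ
  -- Markov's inequality for `(Y - μ[Y] + u)²`, with the shift `u = v / t` that optimizes the bound
  set u := v / t
  have hu : 0 ≤ u := by positivity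
  have hsub : {ω | μ[Y] + t ≤ Y ω} ⊆ {ω | (t + u) ^ 2 ≤ (Y ω - μ[Y] + u) ^ 2} :=
      fun ω (hω : μ[Y] + t ≤ Y ω) ↦ by
    have : t + u ≤ Y ω - μ[Y] + u := by linarith
    exact pow_le_pow_left₀ (by positivity) this 2
  have hmarkov := mul_meas_ge_le_integral_of_nonneg (μ := μ)
    (ae_of_all _ fun ω ↦ sq_nonneg (Y ω - μ[Y] + u))
    ((hY.sub (memLp_const _)).add (memLp_const u)).integrable_sq ((t + u) ^ 2)
  rw [integral_sq_sub_integral_add hY] at hmarkov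
  have key : (t + u) ^ 2 * μ.real {ω | μ[Y] + t ≤ Y ω} ≤ v + u ^ 2 :=
    (mul_le_mul_of_nonneg_left (measureReal_mono hsub) (by positivity)).trans hmarkov
  calc μ.real {ω | μ[Y] + t ≤ Y ω} ≤ (v + u ^ 2) / (t + u) ^ 2 := by
        rw [le_div_iff₀ (by positivity)]; linarith
    _ = v / (v + t ^ 2) := by
        rw [show u = v / t from rfl]
        field_simp
        ring

theorem measureReal_pos_le_of_variance_le {β : ℝ} (hY : MemLp Y 2 μ) (hβ₀ : 0 ≤ β)
    (hβ₁ : β < 1) (hmean : μ[Y] ≤ 0) (hvar : (1 - β) * Var[Y; μ] ≤ β * μ[Y] ^ 2) :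
    μ.real {ω | 0 < Y ω} ≤ β := by
  have hv := variance_nonneg Y μ
  rcases hmean.lt_or_eq with hneg | hzero
  · calc μ.real {ω | 0 < Y ω} ≤ μ.real {ω | μ[Y] + -μ[Y] ≤ Y ω} :=
          measureReal_mono fun ω (hω : 0 < Y ω) ↦ show μ[Y] + -μ[Y] ≤ Y ω by linarith
      _ ≤ Var[Y; μ] / (Var[Y; μ] + (-μ[Y]) ^ 2) :=
          measureReal_integral_add_le_le_variance_div hY (neg_pos.2 hneg)
      _ ≤ β := by
          rw [div_le_iff₀ (add_pos_of_nonneg_of_pos hv (pow_pos (neg_pos.2 hneg) 2))]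
          linarith
  · have hv0 : Var[Y; μ] = 0 := by
      rw [hzero] at hvar
      nlinarith
    have hae : ∀ᵐ ω ∂μ, ¬ 0 < Y ω := by
      filter_upwards [ae_eq_integral_of_variance_eq_zero hY hv0] with ω hω
      rw [hω, hzero]
      exact lt_irrefl 0
    rw [(measureReal_eq_zero_iff).2 (by simpa only [not_not] using ae_iff.1 hae)]
    exact hβ₀

end ProbabilityTheory

/-- Theorem (Chebyshev–Cantelli reformulation of an affine individual chance constraint):
if `X` has finite second moment and
`√((1-β)·a²·Var(X)) + √β·(a·E[X] + b) ≤ 0` with `β ∈ (0,1)`, then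
`P(a·X + b ≤ 0) ≥ 1 - β`. -/
theorem affine_chance_constraint_of_mean_variance
    {Ω : Type*} [MeasurableSpace Ω] (μ : Measure Ω) [IsProbabilityMeasure μ]
    (X : Ω → ℝ) (hX : MemLp X 2 μ) (a b β : ℝ) (hβ : β ∈ Set.Ioo (0 : ℝ) 1)
    (h : Real.sqrt ((1 - β) * a ^ 2 * variance X μ)
        + Real.sqrt β * (a * (∫ ω, X ω ∂μ) + b) ≤ 0) :
    1 - β ≤ (μ {ω | a * X ω + b ≤ 0}).toReal := by
  have hY : MemLp (fun ω ↦ a * X ω + b) 2 μ := (hX.const_mul a).add (memLp_const b)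
  have hmean : μ[fun ω ↦ a * X ω + b] = a * μ[X] + b := by
    rw [integral_add ((hX.integrable one_le_two).const_mul a) (integrable_const b),
      integral_const_mul]
    simp
  have hvar : Var[fun ω ↦ a * X ω + b; μ] = a ^ 2 * Var[X; μ] := by
    rw [variance_add_const (hX.aestronglyMeasurable.const_mul a), variance_const_mul]
  obtain ⟨hmean_nonpos, hvar_le⟩ :=
    Real.nonpos_and_le_mul_sq_of_sqrt_add_sqrt_mul_nonpos (x := (1 - β) * (a ^ 2 * Var[X; μ]))
      hβ.1 (by rwa [← mul_assoc])
  have htail : μ.real {ω | 0 < a * X ω + b} ≤ β :=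
    measureReal_pos_le_of_variance_le hY hβ.1.le hβ.2 (hmean ▸ hmean_nonpos)
      (by rwa [hvar, hmean])
  have hcompl : {ω | a * X ω + b ≤ 0} = {ω | 0 < a * X ω + b}ᶜ := by
    ext ω; simp
  rw [← measureReal_def, hcompl, probReal_compl_eq_one_sub₀
    (aestronglyMeasurable_const.nullMeasurableSet_lt hY.aestronglyMeasurable)]
  linarith
end

section
/- Let γ be the standard Gaussian probability measure on ℝ (mean 0, variance 1). Then every polynomial function lies in L²(γ), and the linear span of the monomial functions x ↦ xⁿ, n ∈ ℕ, is dense in the real Hilbert space L²(γ). Consequently the Hermite polynomials, being the orthogonal polynomials of γ, form a complete orthogonal basis of L²(γ), so every square-integrable functional of a standard Gaussian germ is the mean-square limit of its truncated Wiener–Hermite polynomial chaos expansions. -/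
/-! If `g ∈ L²(γ)` is orthogonal to every monomial, compare the finite measures `g⁺ γ` and
`g⁻ γ`. Since `x ↦ exp (t x)` lies in `L²(γ)` for every `t`, both measures have exponential
moments of all orders, so their complex moment generating functions are entire, with the
moments as Taylor coefficients at `0`. Orthogonality says that these moments agree, hence the
two complex MGFs, and with them the characteristic functions, coincide; so `g⁺ γ = g⁻ γ` and
`g = 0` almost everywhere. The polynomials thus have trivial orthogonal complement in `L²(γ)`. -/

open MeasureTheory ProbabilityTheory Nat Polynomial

namespace ProbabilityTheory

lemma integrable_pow_of_integrableExpSet_id_eq_univ {μ : Measure ℝ}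
    (hμ : integrableExpSet id μ = Set.univ) (n : ℕ) : Integrable (fun x => x ^ n) μ :=
  integrable_pow_of_mem_interior_integrableExpSet (X := id) (by simp [hμ]) n

lemma complexMGF_id_eq_tsum {μ : Measure ℝ} (hμ : integrableExpSet id μ = Set.univ) (z : ℂ) :
    complexMGF id μ z = ∑' n : ℕ, (n ! : ℂ)⁻¹ * ((∫ x, x ^ n ∂μ : ℝ) : ℂ) * z ^ n := by
  have hstrip : {w : ℂ | w.re ∈ interior (integrableExpSet id μ)} = Set.univ := by
    simp [hμ]
  have hentire : Differentiable ℂ (complexMGF id μ) := by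
    rw [← differentiableOn_univ, ← hstrip]
    exact differentiableOn_complexMGF
  rw [← Complex.taylorSeries_eq_of_entire' hentire (c := 0) (z := z)]
  congr 1 with n
  rw [iteratedDeriv_complexMGF (by simp [hμ]), sub_zero, ← integral_complex_ofReal]
  simp

lemma _root_.MeasureTheory.Measure.ext_of_integral_pow_eq {μ ν : Measure ℝ}
    [IsFiniteMeasure μ] [IsFiniteMeasure ν]
    (hμ : integrableExpSet id μ = Set.univ) (hν : integrableExpSet id ν = Set.univ)
    (h : ∀ n : ℕ, ∫ x, x ^ n ∂μ = ∫ x, x ^ n ∂ν) : μ = ν :=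
  Measure.ext_of_complexMGF_id_eq <| funext fun z => by
    simp only [complexMGF_id_eq_tsum hμ, complexMGF_id_eq_tsum hν, h]

end ProbabilityTheory

namespace MeasureTheory

variable {α : Type*} [MeasurableSpace α] {μ : Measure α} {g : α → ℝ}

lemma integrable_withDensity_ofReal_iff (hg : AEMeasurable g μ) {h : α → ℝ} :
    Integrable h (μ.withDensity fun x => ENNReal.ofReal (g x)) ↔
      Integrable (fun x => max (g x) 0 * h x) μ := by
  rw [integrable_withDensity_iff_integrable_smul₀' hg.ennreal_ofReal
    (ae_of_all _ fun _ => ENNReal.ofReal_lt_top)]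
  simp [ENNReal.toReal_ofReal']

lemma integral_withDensity_ofReal (hg : AEMeasurable g μ) (h : α → ℝ) :
    ∫ x, h x ∂(μ.withDensity fun x => ENNReal.ofReal (g x)) = ∫ x, max (g x) 0 * h x ∂μ := by
  rw [integral_withDensity_eq_integral_toReal_smul₀ hg.ennreal_ofReal
    (ae_of_all _ fun _ => ENNReal.ofReal_lt_top)]
  simp [ENNReal.toReal_ofReal']

end MeasureTheory

lemma integrableExpSet_withDensity_ofReal {μ : Measure ℝ} {g : ℝ → ℝ}
    (hg : ∀ t, Integrable (fun x => Real.exp (t * x) * g x) μ) :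
    integrableExpSet id (μ.withDensity fun x => ENNReal.ofReal (g x)) = Set.univ := by
  have hgm : AEMeasurable g μ := by simpa using (hg 0).aemeasurable
  refine Set.eq_univ_of_forall fun t => ?_
  rw [integrableExpSet, Set.mem_ofPred_eq, integrable_withDensity_ofReal_iff hgm]
  refine (hg t).mono (by fun_prop) (ae_of_all _ fun x => ?_)
  simp only [norm_mul, id, Real.norm_eq_abs, mul_comm]
  exact mul_le_mul_of_nonneg_right (abs_max_le_max_abs_abs.trans_eq (by simp)) (abs_nonneg _)

lemma ae_eq_zero_of_integral_pow_mul_eq_zero {μ : Measure ℝ} {g : ℝ → ℝ}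
    (hg : ∀ t, Integrable (fun x => Real.exp (t * x) * g x) μ)
    (h : ∀ n : ℕ, ∫ x, x ^ n * g x ∂μ = 0) : g =ᵐ[μ] 0 := by
  have hg_int : Integrable g μ := by simpa using hg 0
  have hg_neg (t : ℝ) : Integrable (fun x => Real.exp (t * x) * -g x) μ := by
    simpa using (hg t).neg
  have hgm := hg_int.aemeasurable
  have hgm' : AEMeasurable (fun x => -g x) μ := hgm.neg
  have hpos := integrableExpSet_withDensity_ofReal hg
  have hneg := integrableExpSet_withDensity_ofReal hg_neg
  have := isFiniteMeasure_withDensity_ofReal hg_int.2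
  have := isFiniteMeasure_withDensity_ofReal hg_int.fun_neg.2
  have hmom (n : ℕ) : ∫ x, x ^ n ∂(μ.withDensity fun x => ENNReal.ofReal (g x)) =
      ∫ x, x ^ n ∂(μ.withDensity fun x => ENNReal.ofReal (-g x)) := by
    have ipos := (integrable_withDensity_ofReal_iff hgm).1
      (integrable_pow_of_integrableExpSet_id_eq_univ hpos n)
    have ineg := (integrable_withDensity_ofReal_iff hgm').1
      (integrable_pow_of_integrableExpSet_id_eq_univ hneg n)
    rw [integral_withDensity_ofReal hgm, integral_withDensity_ofReal hgm', ← sub_eq_zero,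
      ← integral_sub ipos ineg]
    convert h n using 3 with x
    rw [← sub_mul, max_zero_sub_max_neg_zero_eq_self, mul_comm]
  have hdens := (withDensity_eq_iff hgm.ennreal_ofReal hgm'.ennreal_ofReal
    ((lintegral_mono fun x => Real.ofReal_le_enorm (g x)).trans_lt hg_int.2).ne).1
    (Measure.ext_of_integral_pow_eq hpos hneg hmom)
  filter_upwards [hdens] with x hx
  rcases le_total (g x) 0 with h0 | h0
  · have := ENNReal.ofReal_eq_zero.1 (hx.symm.trans (ENNReal.ofReal_of_nonpos h0))
    simp only [Pi.zero_apply]; linarith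
  · have := ENNReal.ofReal_eq_zero.1 (hx.trans (ENNReal.ofReal_of_nonpos (by linarith)))
    simp only [Pi.zero_apply]; linarith

section Density

variable {μ : Measure ℝ}

lemma memLp_two_eval_of_integrableExpSet_id_eq_univ (hμ : integrableExpSet id μ = Set.univ)
    (p : ℝ[X]) : MemLp (fun x => p.eval x) 2 μ := by
  induction p using Polynomial.induction_on' with
  | add p q hp hq =>
    simp only [eval_add]
    exact hp.add hq
  | monomial n c =>
    have hpow : MemLp (fun x : ℝ => x ^ n) 2 μ :=
      (memLp_two_iff_integrable_sq (by fun_prop)).2 <| by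
        simpa [← pow_mul] using integrable_pow_of_integrableExpSet_id_eq_univ hμ (n * 2)
    simpa using hpow.const_mul c

lemma memLp_two_exp_mul_of_integrableExpSet_id_eq_univ (hμ : integrableExpSet id μ = Set.univ)
    (t : ℝ) : MemLp (fun x => Real.exp (t * x)) 2 μ := by
  refine (memLp_two_iff_integrable_sq (by fun_prop)).2 ?_
  have h2t : Integrable (fun x => Real.exp (2 * t * x)) μ :=
    (hμ.symm ▸ Set.mem_univ (2 * t) : 2 * t ∈ integrableExpSet id μ)
  refine h2t.congr (ae_of_all _ fun x => ?_)
  dsimp only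
  rw [sq, ← Real.exp_add]
  ring_nf

noncomputable def polynomialToL2 (hμ : integrableExpSet id μ = Set.univ) :
    ℝ[X] →ₗ[ℝ] Lp ℝ 2 μ where
  toFun p := (memLp_two_eval_of_integrableExpSet_id_eq_univ hμ p).toLp _
  map_add' p q := by
    simp_rw [eval_add]
    exact MemLp.toLp_add (memLp_two_eval_of_integrableExpSet_id_eq_univ hμ p)
      (memLp_two_eval_of_integrableExpSet_id_eq_univ hμ q)
  map_smul' c p := by
    simp_rw [eval_smul]
    exact MemLp.toLp_const_smul c (memLp_two_eval_of_integrableExpSet_id_eq_univ hμ p)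

lemma polynomialToL2_apply (hμ : integrableExpSet id μ = Set.univ) (p : ℝ[X]) :
    polynomialToL2 hμ p = (memLp_two_eval_of_integrableExpSet_id_eq_univ hμ p).toLp _ := rfl

lemma denseRange_polynomialToL2 (hμ : integrableExpSet id μ = Set.univ) :
    DenseRange (polynomialToL2 hμ) := by
  rw [DenseRange, ← LinearMap.coe_range, Submodule.dense_iff_topologicalClosure_eq_top,
    Submodule.topologicalClosure_eq_top_iff, Submodule.eq_bot_iff]
  intro y hy
  have hmom (n : ℕ) : ∫ x, x ^ n * y x ∂μ = 0 := by
    have h := (Submodule.mem_orthogonal _ _).1 hy _ (LinearMap.mem_range_self _ (X ^ n))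
    rw [polynomialToL2_apply, L2.inner_def] at h
    refine (integral_congr_ae ?_).trans h
    filter_upwards [MemLp.coeFn_toLp (memLp_two_eval_of_integrableExpSet_id_eq_univ hμ (X ^ n))]
      with x hx
    rw [hx]
    simp [mul_comm]
  refine Lp.eq_zero_iff_ae_eq_zero.2 (ae_eq_zero_of_integral_pow_mul_eq_zero (fun t => ?_) hmom)
  exact (memLp_two_exp_mul_of_integrableExpSet_id_eq_univ hμ t).integrable_mul (Lp.memLp y)

lemma exists_eLpNorm_sub_eval_lt (hμ : integrableExpSet id μ = Set.univ) {f : ℝ → ℝ}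
    (hf : MemLp f 2 μ) {ε : ℝ} (hε : 0 < ε) :
    ∃ p : ℝ[X], eLpNorm (fun x => f x - p.eval x) 2 μ < ENNReal.ofReal ε := by
  obtain ⟨p, hp⟩ := (denseRange_polynomialToL2 hμ).exists_dist_lt (hf.toLp f) hε
  rw [← edist_lt_ofReal, polynomialToL2_apply, Lp.edist_toLp_toLp] at hp
  exact ⟨p, hp⟩

end Density

/-- Theorem (Cameron–Martin completeness of the Wiener–Hermite basis): every
polynomial function lies in `L²` of the standard Gaussian measure `γ` on `ℝ`,
and the polynomial functions (the span of the monomials) are dense in `L²(γ)`: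
every square-integrable functional of a standard Gaussian germ is the mean-square
limit of polynomials. Hence the Hermite polynomials, being the orthogonal
polynomials of `γ`, form a complete orthogonal basis of `L²(γ)`. -/
theorem hermite_basis_complete :
    (∀ p : Polynomial ℝ, MemLp (fun x => p.eval x) 2 (gaussianReal 0 1)) ∧
    (∀ f : ℝ → ℝ, MemLp f 2 (gaussianReal 0 1) → ∀ ε : ℝ, 0 < ε →
      ∃ p : Polynomial ℝ,
        eLpNorm (fun x => f x - p.eval x) 2 (gaussianReal 0 1) < ENNReal.ofReal ε) :=
  ⟨memLp_two_eval_of_integrableExpSet_id_eq_univ integrableExpSet_id_gaussianReal,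
    fun _ hf _ hε => exists_eLpNorm_sub_eval_lt integrableExpSet_id_gaussianReal hf hε⟩
end
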